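/- Suppose vectors a₁,…,a_p and b₁,…,b_p in ℝ^m satisfy: for all scalars λ₁,…,λ_p, ‖Σ λ_j (b_j − a_j)‖ ≤ ε ‖Σ λ_j a_j‖, with 0 ≤ ε < 1 and a₁,…,a_p linearly independent. Then b₁,…,b_p are linearly independent, and for each j, (1−ε)·dist(a_j, span{a_k: k≠j}) ≤ dist(b_j, span{b_k: k≠j}) ≤ (1+ε)·dist(a_j, span{a_k: k≠j}). -/
import Mathlib

open Metric Submodule Finset

lemma mem_span_compl_iff {m p : ℕ} (v : Fin p → EuclideanSpace ℝ (Fin m)) (j : Fin p)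
    (x : EuclideanSpace ℝ (Fin m)) :
    x ∈ Submodule.span ℝ (v '' {j}ᶜ) ↔ ∃ c : Fin p → ℝ, c j = 0 ∧ ∑ k, c k • v k = x := by
  constructor
  · intro hx
    refine Submodule.span_induction ?_ ?_ ?_ ?_ hx
    · rintro y ⟨k, hk, rfl⟩
      refine ⟨Pi.single k 1, ?_, ?_⟩
      · exact Pi.single_eq_of_ne (Ne.symm (Set.mem_compl_singleton_iff.mp hk)) 1
      · simp [Pi.single_apply, ite_smul]
    · exact ⟨0, by simp, by simp⟩
    · rintro y z _ _ ⟨c, hc, rfl⟩ ⟨d, hd, rfl⟩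
      exact ⟨c + d, by simp [hc, hd], by simp [add_smul, Finset.sum_add_distrib]⟩
    · rintro r y _ ⟨c, hc, rfl⟩
      exact ⟨r • c, by simp [hc], by simp [smul_smul, Finset.smul_sum]⟩
  · rintro ⟨c, hc, rfl⟩
    refine Submodule.sum_mem _ fun k _ => ?_
    by_cases h : k = j
    · subst h; simp [hc]
    · exact Submodule.smul_mem _ _ (Submodule.subset_span ⟨k, by simp [h], rfl⟩)

lemma sum_delta_sub {m p : ℕ} (v : Fin p → EuclideanSpace ℝ (Fin m)) (j : Fin p)
    (c : Fin p → ℝ) :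
    (∑ k, ((if k = j then (1:ℝ) else 0) - c k) • v k) = v j - ∑ k, c k • v k := by
  simp [sub_smul, Finset.sum_sub_distrib, ite_smul]

lemma le_infDist_aux {X : Type*} [MetricSpace X] {s : Set X} {x : X} {B : ℝ}
    (hs : s.Nonempty) (h : ∀ y ∈ s, B ≤ dist x y) : B ≤ Metric.infDist x s := by
  by_contra hlt
  push_neg at hlt
  obtain ⟨y, hy, hd⟩ := (Metric.infDist_lt_iff hs).mp hlt
  exact absurd (h y hy) (by linarith)

theorem stmt_17 {m p : ℕ} (a b : Fin p → EuclideanSpace ℝ (Fin m)) (ε : ℝ)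
    (hε0 : 0 ≤ ε) (hε1 : ε < 1) (ha : LinearIndependent ℝ a)
    (hab : ∀ lam : Fin p → ℝ,
      ‖∑ j, lam j • (b j - a j)‖ ≤ ε * ‖∑ j, lam j • a j‖) :
    LinearIndependent ℝ b ∧
      ∀ j, (1 - ε) *
            Metric.infDist (a j) (Submodule.span ℝ (a '' {j}ᶜ) : Set (EuclideanSpace ℝ (Fin m)))
          ≤ Metric.infDist (b j) (Submodule.span ℝ (b '' {j}ᶜ) : Set (EuclideanSpace ℝ (Fin m))) ∧
        Metric.infDist (b j) (Submodule.span ℝ (b '' {j}ᶜ) : Set (EuclideanSpace ℝ (Fin m)))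
          ≤ (1 + ε) *
            Metric.infDist (a j) (Submodule.span ℝ (a '' {j}ᶜ) : Set (EuclideanSpace ℝ (Fin m))) := by
  have hsum : ∀ lam : Fin p → ℝ,
      (∑ k, lam k • b k) = (∑ k, lam k • a k) + ∑ k, lam k • (b k - a k) := by
    intro lam
    rw [← Finset.sum_add_distrib]
    exact Finset.sum_congr rfl fun k _ => by rw [smul_sub]; abel
  have hup : ∀ lam : Fin p → ℝ, ‖∑ k, lam k • b k‖ ≤ (1 + ε) * ‖∑ k, lam k • a k‖ := by
    intro lam
    calc ‖∑ k, lam k • b k‖ ≤ ‖∑ k, lam k • a k‖ + ‖∑ k, lam k • (b k - a k)‖ := by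
          rw [hsum lam]; exact norm_add_le _ _
      _ ≤ ‖∑ k, lam k • a k‖ + ε * ‖∑ k, lam k • a k‖ := by linarith [hab lam]
      _ = (1 + ε) * ‖∑ k, lam k • a k‖ := by ring
  have hlo : ∀ lam : Fin p → ℝ, (1 - ε) * ‖∑ k, lam k • a k‖ ≤ ‖∑ k, lam k • b k‖ := by
    intro lam
    have h1 : ‖∑ k, lam k • a k‖ ≤ ‖∑ k, lam k • b k‖ + ‖∑ k, lam k • (b k - a k)‖ := by
      have h2 : (∑ k, lam k • a k) = (∑ k, lam k • b k) - ∑ k, lam k • (b k - a k) := by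
        rw [hsum lam]; abel
      rw [h2]; exact norm_sub_le _ _
    nlinarith [hab lam]
  have hbli : LinearIndependent ℝ b := by
    rw [Fintype.linearIndependent_iff] at ha ⊢
    intro g hg
    have h0 : (1 - ε) * ‖∑ k, g k • a k‖ ≤ 0 := by
      have := hlo g; rw [hg] at this; simpa using this
    have hz : ‖∑ k, g k • a k‖ = 0 := by nlinarith [norm_nonneg (∑ k, g k • a k)]
    exact ha g (by rwa [norm_eq_zero] at hz)
  refine ⟨hbli, fun j => ?_⟩
  set Sa := (Submodule.span ℝ (a '' {j}ᶜ) : Set (EuclideanSpace ℝ (Fin m))) with hSa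
  set Sb := (Submodule.span ℝ (b '' {j}ᶜ) : Set (EuclideanSpace ℝ (Fin m))) with hSb
  have hSaNe : Sa.Nonempty := ⟨0, Submodule.zero_mem _⟩
  have hSbNe : Sb.Nonempty := ⟨0, Submodule.zero_mem _⟩
  constructor
  · refine le_infDist_aux hSbNe ?_
    rintro y hy
    obtain ⟨c, hc, rfl⟩ := (mem_span_compl_iff b j y).mp hy
    set lam : Fin p → ℝ := fun k => (if k = j then (1:ℝ) else 0) - c k with hlam
    have hb' : ‖∑ k, lam k • b k‖ = dist (b j) (∑ k, c k • b k) := by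
      rw [dist_eq_norm, hlam, sum_delta_sub]
    have ha' : ‖∑ k, lam k • a k‖ = dist (a j) (∑ k, c k • a k) := by
      rw [dist_eq_norm, hlam, sum_delta_sub]
    have hmem : (∑ k, c k • a k) ∈ Sa := (mem_span_compl_iff a j _).mpr ⟨c, hc, rfl⟩
    have h1 : Metric.infDist (a j) Sa ≤ dist (a j) (∑ k, c k • a k) :=
      infDist_le_dist_of_mem hmem
    have := hlo lam
    rw [hb', ha'] at this
    nlinarith
  · rw [show (1 + ε) * Metric.infDist (a j) Sa = Metric.infDist (a j) Sa * (1 + ε) by ring,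
      ← div_le_iff₀ (by linarith : (0:ℝ) < 1 + ε)]
    refine le_infDist_aux hSaNe ?_
    rintro y hy
    obtain ⟨c, hc, rfl⟩ := (mem_span_compl_iff a j y).mp hy
    set lam : Fin p → ℝ := fun k => (if k = j then (1:ℝ) else 0) - c k with hlam
    have hb' : ‖∑ k, lam k • b k‖ = dist (b j) (∑ k, c k • b k) := by
      rw [dist_eq_norm, hlam, sum_delta_sub]
    have ha' : ‖∑ k, lam k • a k‖ = dist (a j) (∑ k, c k • a k) := by
      rw [dist_eq_norm, hlam, sum_delta_sub]
    have hmem : (∑ k, c k • b k) ∈ Sb := (mem_span_compl_iff b j _).mpr ⟨c, hc, rfl⟩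
    have h1 : Metric.infDist (b j) Sb ≤ dist (b j) (∑ k, c k • b k) :=
      infDist_le_dist_of_mem hmem
    have := hup lam
    rw [hb', ha'] at this
    rw [div_le_iff₀ (by linarith : (0:ℝ) < 1 + ε)]
    nlinarith
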